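/- arXiv:1803.01767 — 7 statements merged into one kernel-verified Lean document; each statement's English description precedes it below -/
import Mathlib

section
/- Let S be a finite set, T a stochastic matrix on S with all entries strictly positive, and γ : S → ℝ with all values strictly positive, and let Φ be the mutation-selection map Φ(π)(j) = γ(j)·(πT)(j) / Σ_{k∈S} γ(k)·(πT)(k). Then for every probability vector π₀ on S, the sequence of iterates Φⁿ(π₀) converges as n → ∞ to some probability vector on S. -/
open Filter Matrix Finset

section aux
variable {S : Type*} [Fintype S]

lemma mediant_le' {u a b : S → ℝ} {M : ℝ}
    (hu : ∀ i, 0 ≤ u i) (hb : ∀ i, 0 < b i)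
    (hM : ∀ i, a i / b i ≤ M) (hub : 0 < ∑ i, u i * b i) :
    (∑ i, u i * a i) / (∑ i, u i * b i) ≤ M := by
  rw [div_le_iff₀ hub]
  calc ∑ i, u i * a i ≤ ∑ i, u i * (M * b i) :=
        Finset.sum_le_sum fun i _ =>
          mul_le_mul_of_nonneg_left ((div_le_iff₀ (hb i)).mp (hM i)) (hu i)
    _ = M * ∑ i, u i * b i := by rw [Finset.mul_sum]; exact Finset.sum_congr rfl fun i _ => by ring

lemma le_mediant' {u a b : S → ℝ} {m : ℝ}
    (hu : ∀ i, 0 ≤ u i) (hb : ∀ i, 0 < b i)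
    (hm : ∀ i, m ≤ a i / b i) (hub : 0 < ∑ i, u i * b i) :
    m ≤ (∑ i, u i * a i) / (∑ i, u i * b i) := by
  rw [le_div_iff₀ hub]
  calc m * ∑ i, u i * b i = ∑ i, u i * (m * b i) := by
        rw [Finset.mul_sum]; exact Finset.sum_congr rfl fun i _ => by ring
    _ ≤ ∑ i, u i * a i :=
        Finset.sum_le_sum fun i _ =>
          mul_le_mul_of_nonneg_left ((le_div_iff₀ (hb i)).mp (hm i)) (hu i)

lemma mediant_contract' [DecidableEq S] {u a b : S → ℝ} {m M δ : ℝ}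
    (hu : ∀ i, 0 ≤ u i) (hb : ∀ i, 0 < b i)
    (hm : ∀ i, m ≤ a i / b i) (hM : ∀ i, a i / b i ≤ M)
    (i₀ : S) (h₀ : a i₀ / b i₀ = m)
    (hub : 0 < ∑ i, u i * b i)
    (hδ : δ * (∑ i, u i * b i) ≤ u i₀ * b i₀) :
    (∑ i, u i * a i) / (∑ i, u i * b i) ≤ M - δ * (M - m) := by
  have hMm : m ≤ M := le_trans (hm i₀) (hM i₀)
  have ha₀ : a i₀ = m * b i₀ := (div_eq_iff (ne_of_gt (hb i₀))).mp h₀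
  rw [div_le_iff₀ hub]
  have e1 : ∑ i, u i * a i = u i₀ * a i₀ + ∑ i ∈ univ.erase i₀, u i * a i :=
    (Finset.add_sum_erase _ _ (mem_univ i₀)).symm
  have e2 : ∑ i, u i * b i = u i₀ * b i₀ + ∑ i ∈ univ.erase i₀, u i * b i :=
    (Finset.add_sum_erase _ _ (mem_univ i₀)).symm
  have e3 : ∑ i ∈ univ.erase i₀, u i * a i ≤ M * ∑ i ∈ univ.erase i₀, u i * b i := by
    rw [Finset.mul_sum]
    refine Finset.sum_le_sum fun i _ => ?_
    calc u i * a i ≤ u i * (M * b i) :=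
          mul_le_mul_of_nonneg_left ((div_le_iff₀ (hb i)).mp (hM i)) (hu i)
      _ = M * (u i * b i) := by ring
  have h4 : (M - m) * (δ * (∑ i, u i * b i)) ≤ (M - m) * (u i₀ * b i₀) :=
    mul_le_mul_of_nonneg_left hδ (sub_nonneg.mpr hMm)
  have e5 : u i₀ * a i₀ = m * (u i₀ * b i₀) := by rw [ha₀]; ring
  have e6 : M * (∑ i, u i * b i)
      = M * (u i₀ * b i₀) + M * ∑ i ∈ univ.erase i₀, u i * b i := by
    conv_lhs => rw [e2]
    ring
  linarith [e1, e3, h4, e5, e6]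

end aux

section core
variable {S : Type*} [Fintype S] [DecidableEq S] [Nonempty S]

lemma pow_entries_pos (A : Matrix S S ℝ) (hA : ∀ i j, 0 < A i j) :
    ∀ n, ∀ i j, 0 < (A ^ (n + 1)) i j := by
  intro n
  induction n with
  | zero => simpa using hA
  | succ n ih =>
    intro i j
    rw [pow_succ', Matrix.mul_apply]
    exact Finset.sum_pos (fun k _ => mul_pos (hA i k) (ih k j)) univ_nonempty

lemma ratio_tendsto (A : Matrix S S ℝ) (hA : ∀ i j, 0 < A i j) :
    ∃ L : S → S → ℝ, (∀ j k, 0 < L j k) ∧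
      ∀ (j k : S) (u : S → ℝ), (∀ i, 0 ≤ u i) → (0 < ∑ i, u i) →
        Tendsto (fun n : ℕ =>
            (∑ i, u i * (A ^ (n + 1)) i j) / (∑ i, u i * (A ^ (n + 1)) i k))
          atTop (nhds (L j k)) := by
  have hP : ∀ n (i j : S), 0 < (A ^ (n + 1)) i j := pow_entries_pos A hA
  have hne : (univ : Finset (S × S)).Nonempty := univ_nonempty
  set c : ℝ := (univ : Finset (S × S)).inf' hne (fun p => A p.1 p.2) with hc_def
  set b : ℝ := (univ : Finset (S × S)).sup' hne (fun p => A p.1 p.2) with hb_def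
  have hc : 0 < c := by
    rw [hc_def, Finset.lt_inf'_iff]
    exact fun p _ => hA p.1 p.2
  have hcle : ∀ i j, c ≤ A i j := fun i j => Finset.inf'_le _ (mem_univ (i, j))
  have hble : ∀ i j, A i j ≤ b := fun i j => Finset.le_sup' (fun p : S × S => A p.1 p.2) (mem_univ (i, j))
  have hb : 0 < b := lt_of_lt_of_le hc (le_trans (hcle (Classical.arbitrary S) (Classical.arbitrary S)) (hble _ _))
  have hcb : c ≤ b := le_trans (hcle (Classical.arbitrary S) (Classical.arbitrary S)) (hble _ _)
  -- comparability of entries within a column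
  have comp : ∀ n (l l' k : S), (c / b) * (A ^ (n + 1)) l' k ≤ (A ^ (n + 1)) l k := by
    intro n l l' k
    cases n with
    | zero =>
      simp only [zero_add, pow_one]
      calc (c / b) * A l' k ≤ (c / b) * b :=
            mul_le_mul_of_nonneg_left (hble l' k) (le_of_lt (div_pos hc hb))
        _ = c := div_mul_cancel₀ c (ne_of_gt hb)
        _ ≤ A l k := hcle l k
    | succ n =>
      have e : ∀ l₁ : S, (A ^ (n + 2)) l₁ k = ∑ t, A l₁ t * (A ^ (n + 1)) t k := by
        intro l₁; rw [pow_succ', Matrix.mul_apply]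
      have h1 : (A ^ (n + 2)) l' k ≤ b * ∑ t, (A ^ (n + 1)) t k := by
        rw [e, Finset.mul_sum]
        exact Finset.sum_le_sum fun t _ =>
          mul_le_mul_of_nonneg_right (hble l' t) (le_of_lt (hP n t k))
      have h2 : c * ∑ t, (A ^ (n + 1)) t k ≤ (A ^ (n + 2)) l k := by
        rw [e, Finset.mul_sum]
        exact Finset.sum_le_sum fun t _ =>
          mul_le_mul_of_nonneg_right (hcle l t) (le_of_lt (hP n t k))
      calc (c / b) * (A ^ (n + 2)) l' k ≤ (c / b) * (b * ∑ t, (A ^ (n + 1)) t k) :=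
            mul_le_mul_of_nonneg_left h1 (le_of_lt (div_pos hc hb))
        _ = c * ∑ t, (A ^ (n + 1)) t k := by rw [← mul_assoc, div_mul_cancel₀ c (ne_of_gt hb)]
        _ ≤ (A ^ (n + 2)) l k := h2
  set δ : ℝ := c ^ 2 / (Fintype.card S * b ^ 2) with hδ_def
  have hcard : (0 : ℝ) < Fintype.card S := by
    exact_mod_cast Fintype.card_pos
  have hδpos : 0 < δ := div_pos (pow_pos hc 2) (mul_pos hcard (pow_pos hb 2))
  have hδ1 : δ ≤ 1 := by
    rw [hδ_def, div_le_one (mul_pos hcard (pow_pos hb 2))]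
    have h1 : c ^ 2 ≤ b ^ 2 := pow_le_pow_left₀ (le_of_lt hc) hcb 2
    have h2 : (1 : ℝ) ≤ Fintype.card S := by exact_mod_cast Fintype.card_pos
    nlinarith [pow_pos hb 2]
  -- the weight lower bound
  have hweight : ∀ n (i i₀ k : S),
      δ * (∑ t, A i t * (A ^ (n + 1)) t k) ≤ A i i₀ * (A ^ (n + 1)) i₀ k := by
    intro n i i₀ k
    have hb1 : ∀ t, A i t * (A ^ (n + 1)) t k ≤ b ^ 2 / c * (A ^ (n + 1)) i₀ k := by
      intro t
      have h1 : (A ^ (n + 1)) t k ≤ (b / c) * (A ^ (n + 1)) i₀ k := by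
        have h := comp n i₀ t k
        have hbc : (0 : ℝ) < b / c := div_pos hb hc
        calc (A ^ (n + 1)) t k = (b / c) * ((c / b) * (A ^ (n + 1)) t k) := by
              field_simp
          _ ≤ (b / c) * (A ^ (n + 1)) i₀ k :=
              mul_le_mul_of_nonneg_left h (le_of_lt hbc)
      calc A i t * (A ^ (n + 1)) t k ≤ b * ((b / c) * (A ^ (n + 1)) i₀ k) := by
            apply mul_le_mul (hble i t) h1 (le_of_lt (hP n t k)) (le_of_lt hb)
        _ = b ^ 2 / c * (A ^ (n + 1)) i₀ k := by ring
    have hsum : ∑ t, A i t * (A ^ (n + 1)) t k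
        ≤ (Fintype.card S) * (b ^ 2 / c * (A ^ (n + 1)) i₀ k) := by
      calc ∑ t, A i t * (A ^ (n + 1)) t k
          ≤ ∑ _t : S, b ^ 2 / c * (A ^ (n + 1)) i₀ k :=
            Finset.sum_le_sum fun t _ => hb1 t
        _ = (Fintype.card S) * (b ^ 2 / c * (A ^ (n + 1)) i₀ k) := by
            rw [Finset.sum_const, nsmul_eq_mul]; norm_num
    calc δ * (∑ t, A i t * (A ^ (n + 1)) t k)
        ≤ δ * ((Fintype.card S) * (b ^ 2 / c * (A ^ (n + 1)) i₀ k)) :=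
          mul_le_mul_of_nonneg_left hsum (le_of_lt hδpos)
      _ = c * (A ^ (n + 1)) i₀ k := by
          rw [hδ_def]; field_simp
      _ ≤ A i i₀ * (A ^ (n + 1)) i₀ k :=
          mul_le_mul_of_nonneg_right (hcle i i₀) (le_of_lt (hP n i₀ k))
  have key : ∀ j k : S, ∃ Ljk : ℝ, 0 < Ljk ∧
      ∀ u : S → ℝ, (∀ i, 0 ≤ u i) → (0 < ∑ i, u i) →
        Tendsto (fun n : ℕ =>
            (∑ i, u i * (A ^ (n + 1)) i j) / (∑ i, u i * (A ^ (n + 1)) i k))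
          atTop (nhds Ljk) := by
    intro j k
    set f : ℕ → S → ℝ := fun n i => (A ^ (n + 1)) i j / (A ^ (n + 1)) i k with hf_def
    have hSne : (univ : Finset S).Nonempty := univ_nonempty
    set m : ℕ → ℝ := fun n => univ.inf' hSne (f n) with hm_def
    set Mx : ℕ → ℝ := fun n => univ.sup' hSne (f n) with hMx_def
    have hfm : ∀ n i, m n ≤ f n i := fun n i => Finset.inf'_le _ (mem_univ i)
    have hfM : ∀ n i, f n i ≤ Mx n := fun n i => Finset.le_sup' _ (mem_univ i)
    have hmpos : ∀ n, 0 < m n := by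
      intro n
      rw [hm_def]
      rw [Finset.lt_inf'_iff]
      exact fun i _ => div_pos (hP n i j) (hP n i k)
    have hgap : ∀ n, 0 ≤ Mx n - m n := fun n =>
      sub_nonneg.mpr (le_trans (hfm n (Classical.arbitrary S)) (hfM n _))
    have hstep : ∀ n i, f (n + 1) i
        = (∑ t, A i t * (A ^ (n + 1)) t j) / (∑ t, A i t * (A ^ (n + 1)) t k) := by
      intro n i
      have e : ∀ j' : S, (A ^ (n + 2)) i j' = ∑ t, A i t * (A ^ (n + 1)) t j' :=
        fun j' => by rw [pow_succ', Matrix.mul_apply]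
      simp only [hf_def]
      rw [e j, e k]
    have hub : ∀ n i, 0 < ∑ t, A i t * (A ^ (n + 1)) t k :=
      fun n i => Finset.sum_pos (fun t _ => mul_pos (hA i t) (hP n t k)) hSne
    have hMmono : ∀ n, Mx (n + 1) ≤ Mx n - δ * (Mx n - m n) := by
      intro n
      apply Finset.sup'_le
      intro i _
      obtain ⟨i₀, -, hi₀⟩ := Finset.exists_mem_eq_inf' hSne (f n)
      rw [hstep n i]
      exact mediant_contract' (fun t => le_of_lt (hA i t)) (fun t => hP n t k)
        (fun t => hfm n t) (fun t => hfM n t) i₀ hi₀.symm (hub n i) (hweight n i i₀ k)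
    have hmmono : ∀ n, m n ≤ m (n + 1) := by
      intro n
      apply Finset.le_inf'
      intro i _
      rw [hstep n i]
      exact le_mediant' (fun t => le_of_lt (hA i t)) (fun t => hP n t k)
        (fun t => hfm n t) (hub n i)
    have hManti : ∀ n, Mx (n + 1) ≤ Mx n := fun n =>
      le_trans (hMmono n) (by nlinarith [hgap n, hδpos])
    have hgapcon : ∀ n, Mx (n + 1) - m (n + 1) ≤ (1 - δ) * (Mx n - m n) := fun n => by
      nlinarith [hMmono n, hmmono n]
    have hgapgeo : ∀ n, Mx n - m n ≤ (1 - δ) ^ n * (Mx 0 - m 0) := by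
      intro n
      induction n with
      | zero => simp
      | succ n ih =>
        calc Mx (n + 1) - m (n + 1) ≤ (1 - δ) * (Mx n - m n) := hgapcon n
          _ ≤ (1 - δ) * ((1 - δ) ^ n * (Mx 0 - m 0)) :=
              mul_le_mul_of_nonneg_left ih (by linarith)
          _ = (1 - δ) ^ (n + 1) * (Mx 0 - m 0) := by ring
    have hgap0 : Tendsto (fun n => Mx n - m n) atTop (nhds 0) := by
      have hgeo : Tendsto (fun n : ℕ => (1 - δ) ^ n * (Mx 0 - m 0)) atTop (nhds 0) := by
        have := (tendsto_pow_atTop_nhds_zero_of_lt_one (r := 1 - δ) (by linarith) (by linarith)).mul_const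
          (Mx 0 - m 0)
        simpa using this
      exact tendsto_of_tendsto_of_tendsto_of_le_of_le tendsto_const_nhds hgeo hgap hgapgeo
    have hmono : Monotone m := monotone_nat_of_le_succ hmmono
    have hbdd : BddAbove (Set.range m) := by
      refine ⟨Mx 0, ?_⟩
      rintro x ⟨n, rfl⟩
      calc m n ≤ Mx n := by linarith [hgap n]
        _ ≤ Mx 0 := antitone_nat_of_succ_le hManti (Nat.zero_le n)
    set L₀ := ⨆ n, m n with hL0
    have hml : Tendsto m atTop (nhds L₀) := tendsto_atTop_ciSup hmono hbdd
    have hMl : Tendsto Mx atTop (nhds L₀) := by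
      have h := hml.add hgap0
      simp only [add_zero] at h
      exact h.congr (fun n => by ring)
    have hL0pos : 0 < L₀ := lt_of_lt_of_le (hmpos 0) (le_ciSup hbdd 0)
    refine ⟨L₀, hL0pos, ?_⟩
    intro u hu hupos
    have hubu : ∀ n, 0 < ∑ i, u i * (A ^ (n + 1)) i k := by
      intro n
      have hex : ∃ i, 0 < u i := by
        by_contra h
        push_neg at h
        have : ∑ i, u i ≤ 0 := Finset.sum_nonpos (fun i _ => h i)
        linarith
      obtain ⟨i₁, hi₁⟩ := hex
      exact Finset.sum_pos' (fun i _ => mul_nonneg (hu i) (le_of_lt (hP n i k)))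
        ⟨i₁, mem_univ i₁, mul_pos hi₁ (hP n i₁ k)⟩
    refine tendsto_of_tendsto_of_tendsto_of_le_of_le hml hMl ?_ ?_
    · intro n
      exact le_mediant' hu (fun i => hP n i k) (fun i => hfm n i) (hubu n)
    · intro n
      exact mediant_le' hu (fun i => hP n i k) (fun i => hfM n i) (hubu n)
  choose L hL1 hL2 using key
  exact ⟨L, hL1, hL2⟩
end core

/-- For the mutation-selection map `Φ` with strictly positive stochastic
matrix `T` and strictly positive fitness vector `γ`, the iterates `Φⁿ(π₀)` converge
to some probability vector, for every initial probability vector `π₀`. -/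
theorem mutation_selection_iterates_converge
    {S : Type*} [Fintype S] [DecidableEq S]
    (T : Matrix S S ℝ) (hTpos : ∀ i j, 0 < T i j) (hTrow : ∀ i, ∑ j, T i j = 1)
    (γ : S → ℝ) (hγ : ∀ k, 0 < γ k)
    (Φ : (S → ℝ) → (S → ℝ))
    (hΦ : ∀ ρ j, Φ ρ j = γ j * Matrix.vecMul ρ T j / ∑ k, γ k * Matrix.vecMul ρ T k)
    (π₀ : S → ℝ) (hnn : ∀ i, 0 ≤ π₀ i) (hsum : ∑ i, π₀ i = 1) :
    ∃ πs : S → ℝ, (∀ i, 0 ≤ πs i) ∧ (∑ i, πs i = 1) ∧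
      Tendsto (fun n : ℕ => Φ^[n] π₀) atTop (nhds πs) := by
  have hne : Nonempty S := by
    rcases isEmpty_or_nonempty S with h | h
    · exact absurd hsum (by simp)
    · exact h
  set A : Matrix S S ℝ := Matrix.of (fun i j => T i j * γ j) with hA_def
  have hA : ∀ i j, 0 < A i j := fun i j => mul_pos (hTpos i j) (hγ j)
  set x : ℕ → S → ℝ := fun n => Matrix.vecMul π₀ (A ^ n) with hx_def
  have hx0 : ∀ i, x 0 i = π₀ i := by
    intro i
    simp [hx_def, Matrix.vecMul_one]
  have hxsucc : ∀ n j, x (n + 1) j = ∑ i, x n i * A i j := by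
    intro n j
    rw [hx_def]
    simp only [pow_succ]
    rw [← Matrix.vecMul_vecMul]
    simp [Matrix.vecMul, dotProduct]
  have hxexp : ∀ n j, x (n + 1) j = ∑ i, π₀ i * (A ^ (n + 1)) i j := by
    intro n j
    rw [hx_def]
    simp [Matrix.vecMul, dotProduct]
  have hxnn : ∀ n i, 0 ≤ x n i := by
    intro n
    induction n with
    | zero => intro i; rw [hx0]; exact hnn i
    | succ n ih =>
      intro j
      rw [hxsucc]
      exact Finset.sum_nonneg fun i _ => mul_nonneg (ih i) (le_of_lt (hA i j))
  have hxspos : ∀ n, 0 < ∑ i, x n i := by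
    intro n
    induction n with
    | zero =>
      have : ∑ i, x 0 i = 1 := by rw [Finset.sum_congr rfl fun i _ => hx0 i]; exact hsum
      rw [this]; exact one_pos
    | succ n ih =>
      have hpos : ∀ j, 0 < x (n + 1) j := by
        intro j
        rw [hxsucc]
        have hex : ∃ i, 0 < x n i := by
          by_contra h
          push_neg at h
          have : ∑ i, x n i ≤ 0 := Finset.sum_nonpos fun i _ => h i
          linarith
        obtain ⟨i₁, hi₁⟩ := hex
        exact Finset.sum_pos' (fun i _ => mul_nonneg (hxnn n i) (le_of_lt (hA i j)))
          ⟨i₁, Finset.mem_univ i₁, mul_pos hi₁ (hA i₁ j)⟩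
      exact Finset.sum_pos (fun j _ => hpos j) Finset.univ_nonempty
  have hxpos : ∀ n j, 0 < x (n + 1) j := by
    intro n j
    rw [hxsucc]
    have hex : ∃ i, 0 < x n i := by
      by_contra h
      push_neg at h
      have : ∑ i, x n i ≤ 0 := Finset.sum_nonpos fun i _ => h i
      linarith [hxspos n]
    obtain ⟨i₁, hi₁⟩ := hex
    exact Finset.sum_pos' (fun i _ => mul_nonneg (hxnn n i) (le_of_lt (hA i j)))
      ⟨i₁, Finset.mem_univ i₁, mul_pos hi₁ (hA i₁ j)⟩
  -- the iterate formula
  have hiter : ∀ n, Φ^[n] π₀ = fun j => x n j / ∑ k, x n k := by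
    intro n
    induction n with
    | zero =>
      funext j
      have h1 : ∑ k, x 0 k = 1 := by rw [Finset.sum_congr rfl fun i _ => hx0 i]; exact hsum
      simp [h1, hx0 j]
    | succ n ih =>
      have hs : (∑ k, x n k) ≠ 0 := ne_of_gt (hxspos n)
      have hs' : (∑ k, x (n + 1) k) ≠ 0 := ne_of_gt (hxspos (n + 1))
      funext j
      rw [Function.iterate_succ_apply', ih, hΦ]
      have hvm : ∀ j' : S, Matrix.vecMul (fun k => x n k / ∑ k, x n k) T j'
          = (∑ i, x n i * T i j') / ∑ k, x n k := by
        intro j'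
        simp only [Matrix.vecMul, dotProduct]
        rw [Finset.sum_div]
        exact Finset.sum_congr rfl fun i _ => by ring
      have hnum : ∀ j' : S, γ j' * Matrix.vecMul (fun k => x n k / ∑ k, x n k) T j'
          = x (n + 1) j' / ∑ k, x n k := by
        intro j'
        rw [hvm, hxsucc]
        have e : ∑ i, x n i * A i j' = γ j' * ∑ i, x n i * T i j' := by
          rw [Finset.mul_sum]
          refine Finset.sum_congr rfl fun i _ => ?_
          show x n i * (T i j' * γ j') = γ j' * (x n i * T i j')
          ring
        rw [e, mul_div_assoc]
      rw [hnum]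
      rw [Finset.sum_congr rfl fun k _ => hnum k]
      rw [← Finset.sum_div]
      rw [div_div_div_comm, div_self hs, div_one]
  -- the limits
  obtain ⟨L, hLpos, hLtendsto⟩ := ratio_tendsto A hA
  have hupos : 0 < ∑ i, π₀ i := by rw [hsum]; exact one_pos
  set πs : S → ℝ := fun j => 1 / ∑ k, L k j with hπs_def
  have hsumLpos : ∀ j, 0 < ∑ k, L k j := fun j =>
    Finset.sum_pos (fun k _ => hLpos k j) Finset.univ_nonempty
  have hconv : ∀ j, Tendsto (fun n : ℕ => x n j / ∑ k, x n k) atTop (nhds (πs j)) := by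
    intro j
    have hratio : Tendsto (fun n : ℕ => ∑ k, (x (n + 1) k / x (n + 1) j)) atTop
        (nhds (∑ k, L k j)) := by
      apply tendsto_finset_sum
      intro k _
      have := hLtendsto k j π₀ hnn hupos
      refine this.congr fun n => ?_
      rw [hxexp n k, hxexp n j]
    have h1 : Tendsto (fun n : ℕ => 1 / ∑ k, (x (n + 1) k / x (n + 1) j)) atTop
        (nhds (1 / ∑ k, L k j)) :=
      tendsto_const_nhds.div hratio (ne_of_gt (hsumLpos j))
    have h2 : Tendsto (fun n : ℕ => x (n + 1) j / ∑ k, x (n + 1) k) atTop (nhds (πs j)) := by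
      refine h1.congr fun n => ?_
      rw [← Finset.sum_div, one_div_div]
    exact (tendsto_add_atTop_iff_nat 1).mp h2
  have hπs_nn : ∀ j, 0 ≤ πs j := fun j => le_of_lt (div_pos one_pos (hsumLpos j))
  have hπs_sum : ∑ j, πs j = 1 := by
    have h1 : Tendsto (fun n : ℕ => ∑ j, (x n j / ∑ k, x n k)) atTop (nhds (∑ j, πs j)) :=
      tendsto_finset_sum _ fun j _ => hconv j
    have h2 : ∀ n, ∑ j, (x n j / ∑ k, x n k) = 1 := by
      intro n
      rw [← Finset.sum_div, div_self (ne_of_gt (hxspos n))]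
    have h3 : Tendsto (fun _ : ℕ => (1 : ℝ)) atTop (nhds (∑ j, πs j)) := by
      refine h1.congr fun n => h2 n
    exact tendsto_nhds_unique h3 tendsto_const_nhds
  refine ⟨πs, hπs_nn, hπs_sum, ?_⟩
  rw [tendsto_pi_nhds]
  intro j
  refine (hconv j).congr fun n => ?_
  rw [hiter n]
end

section
/- Let 0 < p < 1, 0 < q < 1 and γ¹, γ² > 0, and set Δγ = γ² − γ¹. Then the quadratic equation (p+q−1)·Δγ·x² + [(1−q)·Δγ + γ¹·(p+q)]·x − γ¹·q = 0 has exactly one solution x in the open interval (0,1), and this solution is x* = 2γ¹q / [(1−q)·Δγ + γ¹·(p+q) + √((γ¹p + γ²q)² + 2(γ¹p − γ²q)·Δγ + (Δγ)²)]. -/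
set_option maxHeartbeats 2000000 in
/-- The stationarity quadratic
`(p+q-1)Δγ x² + [(1-q)Δγ + γ¹(p+q)] x - γ¹ q = 0` has exactly one solution in `(0,1)`,
given by the explicit formula `x*`. -/
theorem mutation_selection_quadratic_unique_root
    (p q γ1 γ2 : ℝ) (hp0 : 0 < p) (hp1 : p < 1) (hq0 : 0 < q) (hq1 : q < 1)
    (hγ1 : 0 < γ1) (hγ2 : 0 < γ2) (Δγ : ℝ) (hΔ : Δγ = γ2 - γ1)
    (xs : ℝ)
    (hxs : xs = 2 * γ1 * q / ((1 - q) * Δγ + γ1 * (p + q) +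
      Real.sqrt ((γ1 * p + γ2 * q) ^ 2 + 2 * (γ1 * p - γ2 * q) * Δγ + Δγ ^ 2))) :
    (xs ∈ Set.Ioo (0 : ℝ) 1 ∧
      (p + q - 1) * Δγ * xs ^ 2 + ((1 - q) * Δγ + γ1 * (p + q)) * xs - γ1 * q = 0) ∧
    ∀ x ∈ Set.Ioo (0 : ℝ) 1,
      (p + q - 1) * Δγ * x ^ 2 + ((1 - q) * Δγ + γ1 * (p + q)) * x - γ1 * q = 0 →
      x = xs := by
  obtain ⟨D, hD⟩ : ∃ D, D = (γ1 * p + γ2 * q) ^ 2 + 2 * (γ1 * p - γ2 * q) * Δγ + Δγ ^ 2 :=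
    ⟨_, rfl⟩
  rw [← hD] at hxs
  obtain ⟨s, hsdef⟩ : ∃ s, s = Real.sqrt D := ⟨_, rfl⟩
  rw [← hsdef] at hxs
  obtain ⟨a, hadef⟩ : ∃ a, a = (p + q - 1) * Δγ := ⟨_, rfl⟩
  obtain ⟨b, hbdef⟩ : ∃ b, b = (1 - q) * Δγ + γ1 * (p + q) := ⟨_, rfl⟩
  rw [← hbdef] at hxs
  rw [← hadef, ← hbdef]
  have hDalt : D = (γ1 * p - γ2 * q + Δγ) ^ 2 + 4 * γ1 * γ2 * p * q := by
    rw [hD, hΔ]; ring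
  have hDpos : 0 < D := by rw [hDalt]; positivity
  have hs0 : 0 ≤ s := hsdef ▸ Real.sqrt_nonneg _
  have hs2 : s ^ 2 = D := hsdef ▸ Real.sq_sqrt hDpos.le
  have hspos : 0 < s := hsdef ▸ Real.sqrt_pos.mpr hDpos
  have hDb : D = b ^ 2 + 4 * a * γ1 * q := by rw [hD, hbdef, hadef, hΔ]; ring
  have hf1 : a + b - γ1 * q = p * γ2 := by rw [hadef, hbdef, hΔ]; ring
  -- denominator positive
  have hdpos : 0 < b + s := by
    rcases le_or_gt b 0 with hbn | hbp
    · have hgneg : Δγ < 0 := by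
        rw [hbdef] at hbn
        nlinarith [mul_pos hγ1 (add_pos hp0 hq0)]
      have hpq : p + q < 1 := by
        rw [hbdef] at hbn
        have hΔγ1 : -γ1 < Δγ := by rw [hΔ]; linarith
        nlinarith
      have hapos : 0 < a := by rw [hadef]; nlinarith
      have hlt : b ^ 2 < s ^ 2 := by
        rw [hs2, hDb]; nlinarith [mul_pos (mul_pos hapos hγ1) hq0]
      nlinarith
    · linarith
  have hne : b + s ≠ 0 := ne_of_gt hdpos
  have hxspos : 0 < xs := by
    rw [hxs]
    exact div_pos (by positivity) hdpos
  have hxs1 : xs < 1 := by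
    rw [hxs, div_lt_one hdpos]
    rcases le_or_gt (2 * γ1 * q - b) 0 with h | h
    · linarith
    · have h1 : 0 < a + b - γ1 * q := by rw [hf1]; positivity
      have hlt : (2 * γ1 * q - b) ^ 2 < s ^ 2 := by
        rw [hs2, hDb]
        nlinarith [mul_pos (mul_pos hγ1 hq0) h1]
      nlinarith
  have hxsd : xs * (b + s) = 2 * γ1 * q := by
    rw [hxs]; field_simp
  have key : (a * xs ^ 2 + b * xs - γ1 * q) * (b + s) ^ 2 = 0 := by
    have h2 : a * (xs * (b + s)) ^ 2 + b * (xs * (b + s)) * (b + s)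
        - γ1 * q * (b + s) ^ 2 = 0 := by
      rw [hxsd]
      linear_combination (-(γ1 * q)) * (hs2.trans hDb)
    linear_combination h2
  have hroot : a * xs ^ 2 + b * xs - γ1 * q = 0 := by
    rcases mul_eq_zero.mp key with h | h
    · exact h
    · exact absurd h (pow_ne_zero 2 hne)
  refine ⟨⟨⟨hxspos, hxs1⟩, by linarith [hroot]⟩, ?_⟩
  rintro x ⟨hx0, hx1⟩ hx
  have hx' : a * x ^ 2 + b * x - γ1 * q = 0 := by linarith [hx]
  by_contra hne'
  have hdiff : (x - xs) * (a * (x + xs) + b) = 0 := by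
    linear_combination hx' - hroot
  have h2 : a * (x + xs) + b = 0 := by
    rcases mul_eq_zero.mp hdiff with h | h
    · exact absurd (by linarith) hne'
    · exact h
  have hc : a * x * xs = -(γ1 * q) := by nlinarith [hroot, h2]
  have haneg : a < 0 := by
    rcases lt_trichotomy a 0 with h | h | h
    · exact h
    · exfalso; rw [h] at hc; simp at hc; nlinarith [mul_pos hγ1 hq0]
    · exfalso; nlinarith [mul_pos (mul_pos h hx0) hxspos, mul_pos hγ1 hq0]
  have hfact : a * (1 - x) * (1 - xs) = p * γ2 := by
    nlinarith [hx', hroot, h2, hc, hf1]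
  nlinarith [mul_pos (sub_pos.mpr hx1) (sub_pos.mpr hxs1), mul_pos hp0 hγ2]
end

section
/- Let 0 < p < 1, 0 < q < 1, let T = [[1−p, p], [q, 1−q]], let γ = (γ¹, γ²) with γ¹, γ² > 0, and let Φ be the single-gene mutation-selection map Φ(π)(j) = γ(j)·(πT)(j) / (γ(0)·(πT)(0) + γ(1)·(πT)(1)) on probability vectors over {0,1}. Set Δγ = γ² − γ¹ and x* = 2γ¹q / [(1−q)·Δγ + γ¹·(p+q) + √((γ¹p + γ²q)² + 2(γ¹p − γ²q)·Δγ + (Δγ)²)]. Then π* = (x*, 1−x*) is the unique fixed point of Φ among probability vectors on {0,1}, i.e. Φ(π*) = π* and any probability vector π with Φ(π) = π equals π*. -/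
open Matrix

set_option maxHeartbeats 1000000

/-- The single-gene mutation-selection map `Φ` has `π* = (x*, 1 - x*)` as
its unique fixed point among probability vectors on `{0,1}`, with `x*` given by the
explicit formula. -/
theorem mutation_selection_single_gene_unique_fixed_point
    (p q γ1 γ2 : ℝ) (hp0 : 0 < p) (hp1 : p < 1) (hq0 : 0 < q) (hq1 : q < 1)
    (hγ1 : 0 < γ1) (hγ2 : 0 < γ2)
    (T : Matrix (Fin 2) (Fin 2) ℝ) (hT : T = !![1 - p, p; q, 1 - q])
    (γ : Fin 2 → ℝ) (hγ : γ = ![γ1, γ2])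
    (Φ : (Fin 2 → ℝ) → (Fin 2 → ℝ))
    (hΦ : ∀ ρ j, Φ ρ j = γ j * Matrix.vecMul ρ T j / ∑ k, γ k * Matrix.vecMul ρ T k)
    (Δγ : ℝ) (hΔ : Δγ = γ2 - γ1)
    (xs : ℝ)
    (hxs : xs = 2 * γ1 * q / ((1 - q) * Δγ + γ1 * (p + q) +
      Real.sqrt ((γ1 * p + γ2 * q) ^ 2 + 2 * (γ1 * p - γ2 * q) * Δγ + Δγ ^ 2)))
    (πs : Fin 2 → ℝ) (hπs : πs = ![xs, 1 - xs]) :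
    Φ πs = πs ∧
    ∀ π : Fin 2 → ℝ, (∀ i, 0 ≤ π i) → (∑ i, π i = 1) → Φ π = π → π = πs := by
  subst hT hγ hΔ hπs
  set A : ℝ := (1 - p - q) * (γ2 - γ1) with hA
  set B : ℝ := γ1 * (1 - p - 2*q) - γ2 * (1 - q) with hB
  set C : ℝ := γ1 * q with hC
  set D : ℝ := (γ1 * p + γ2 * q) ^ 2 + 2 * (γ1 * p - γ2 * q) * (γ2 - γ1) + (γ2 - γ1) ^ 2
    with hD
  have hCpos : 0 < C := mul_pos hγ1 hq0
  have hDeq : D = B ^ 2 - 4 * A * C := by rw [hD, hA, hB, hC]; ring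
  have hDpos : 0 < D := by
    have : D = (γ1 * p - γ2 * q + (γ2 - γ1)) ^ 2 + 4 * (γ1 * γ2 * (p * q)) := by
      rw [hD]; ring
    nlinarith [sq_nonneg (γ1 * p - γ2 * q + (γ2 - γ1)),
      mul_pos (mul_pos hγ1 hγ2) (mul_pos hp0 hq0)]
  set R : ℝ := Real.sqrt D with hR
  have hRnn : 0 ≤ R := Real.sqrt_nonneg D
  have hR2 : R ^ 2 = D := Real.sq_sqrt hDpos.le
  have hkey : R ^ 2 = (B + 2*C) ^ 2 + 4 * C * (γ2 * p) := by
    rw [hR2, hDeq, hA, hB, hC]; ring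
  have hgt : B + 2*C < R := by nlinarith [mul_pos (mul_pos hCpos hγ2) hp0]
  have hden : 0 < -B + R := by linarith
  have hxs' : xs = 2 * C / (-B + R) := by
    rw [hxs]; congr 1
    · rw [hC]; ring
    · rw [hB]; ring
  have hxs_pos : 0 < xs := by
    rw [hxs']; exact div_pos (by linarith) hden
  have hxs_lt1 : xs < 1 := by
    rw [hxs']; rw [div_lt_one hden]; linarith
  have hfxs : A * xs ^ 2 + B * xs + C = 0 := by
    rw [hxs']
    have hd : (-B + R) ≠ 0 := ne_of_gt hden
    field_simp
    linear_combination C * (hR2.trans hDeq)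
  -- the quadratic as fixed-point equation
  have quad : ∀ x : ℝ, 0 ≤ x → x ≤ 1 → A * x ^ 2 + B * x + C = 0 → x = xs := by
    intro x hx0 hx1 hfx
    by_contra hne
    have hfac : A * (x + xs) + B = 0 := by
      have h : (x - xs) * (A * (x + xs) + B) = 0 := by linear_combination hfx - hfxs
      rcases mul_eq_zero.mp h with h | h
      · exact absurd (by linarith [sub_eq_zero.mp h]) hne
      · exact h
    have hCx : C = A * x * xs := by linear_combination hfx - x * hfac
    have h1 : A * (1 - x) * (1 - xs) = -(γ2 * p) := by
      have hABC : A + B + C = -(γ2 * p) := by rw [hA, hB, hC]; ring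
      linear_combination hABC - hfac - hCx
    have hApos : 0 < A := by
      rcases le_or_gt A 0 with hA0 | hA0
      · have : A * x * xs ≤ 0 :=
          mul_nonpos_of_nonpos_of_nonneg (mul_nonpos_of_nonpos_of_nonneg hA0 hx0) hxs_pos.le
        nlinarith
      · exact hA0
    nlinarith [mul_nonneg (mul_nonneg hApos.le (by linarith : (0:ℝ) ≤ 1 - x))
      (by linarith : (0:ℝ) ≤ 1 - xs), mul_pos hγ2 hp0]
  -- translate Φ fixed-point into the quadratic
  have hvm : ∀ ρ : Fin 2 → ℝ,
      Matrix.vecMul ρ !![1 - p, p; q, 1 - q] = ![ρ 0 * (1-p) + ρ 1 * q, ρ 0 * p + ρ 1 * (1-q)] := by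
    intro ρ
    funext j
    fin_cases j <;>
      simp [Matrix.vecMul, dotProduct, Fin.sum_univ_two] <;> ring
  have hsum : ∀ ρ : Fin 2 → ℝ,
      ∑ k, (![γ1, γ2] : Fin 2 → ℝ) k * Matrix.vecMul ρ !![1 - p, p; q, 1 - q] k
        = γ1 * (ρ 0 * (1-p) + ρ 1 * q) + γ2 * (ρ 0 * p + ρ 1 * (1-q)) := by
    intro ρ
    rw [hvm]
    simp [Fin.sum_univ_two]
  have hΦ0 : ∀ ρ : Fin 2 → ℝ, Φ ρ 0 = γ1 * (ρ 0 * (1-p) + ρ 1 * q) /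
      (γ1 * (ρ 0 * (1-p) + ρ 1 * q) + γ2 * (ρ 0 * p + ρ 1 * (1-q))) := by
    intro ρ
    rw [hΦ, hsum, hvm]
    simp
  have hΦ1 : ∀ ρ : Fin 2 → ℝ, Φ ρ 1 = γ2 * (ρ 0 * p + ρ 1 * (1-q)) /
      (γ1 * (ρ 0 * (1-p) + ρ 1 * q) + γ2 * (ρ 0 * p + ρ 1 * (1-q))) := by
    intro ρ
    rw [hΦ, hsum, hvm]
    simp
  have hfform : ∀ x : ℝ, A * x ^ 2 + B * x + C
      = γ1 * (x * (1-p) + (1-x) * q) * (1 - x) - γ2 * (x * p + (1-x) * (1-q)) * x := by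
    intro x
    rw [hA, hB, hC]; ring
  constructor
  · -- fixed point
    have ha : 0 < xs * (1-p) + (1-xs) * q := by
      have h1 : 0 < xs * (1-p) := mul_pos hxs_pos (by linarith)
      have h2 : 0 ≤ (1-xs) * q := mul_nonneg (by linarith) hq0.le
      linarith
    have hb : 0 < xs * p + (1-xs) * (1-q) := by
      have h1 : 0 < xs * p := mul_pos hxs_pos hp0
      have h2 : 0 ≤ (1-xs) * (1-q) := mul_nonneg (by linarith) (by linarith)
      linarith
    have hS : 0 < γ1 * (xs * (1-p) + (1-xs) * q) + γ2 * (xs * p + (1-xs) * (1-q)) := by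
      have := mul_pos hγ1 ha
      have := mul_pos hγ2 hb
      linarith
    have hfa : γ1 * (xs * (1-p) + (1-xs) * q)
        = xs * (γ1 * (xs * (1-p) + (1-xs) * q) + γ2 * (xs * p + (1-xs) * (1-q))) := by
      have h := (hfform xs).symm.trans hfxs
      linear_combination h
    have h0 : Φ ![xs, 1 - xs] 0 = xs := by
      rw [hΦ0]
      simp only [Matrix.cons_val_zero, Matrix.cons_val_one, Matrix.head_cons]
      rw [div_eq_iff hS.ne']
      linarith [hfa]
    have h1 : Φ ![xs, 1 - xs] 1 = 1 - xs := by
      rw [hΦ1]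
      simp only [Matrix.cons_val_zero, Matrix.cons_val_one, Matrix.head_cons]
      rw [div_eq_iff hS.ne']
      linarith [hfa]
    funext j
    fin_cases j
    · exact h0
    · exact h1
  · -- uniqueness
    intro π hnn hsum1 hfix
    have hπ1 : π 1 = 1 - π 0 := by
      have h := hsum1
      rw [Fin.sum_univ_two] at h
      linarith
    have hx0 : 0 ≤ π 0 := hnn 0
    have hx1 : π 0 ≤ 1 := by have := hnn 1; rw [hπ1] at this; linarith
    have ha : 0 < π 0 * (1-p) + π 1 * q := by
      rcases lt_or_eq_of_le hx0 with h | h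
      · have h1 : 0 < π 0 * (1-p) := mul_pos h (by linarith)
        have h2 : 0 ≤ π 1 * q := mul_nonneg (hnn 1) hq0.le
        linarith
      · have h1 : π 1 = 1 := by rw [hπ1, ← h]; ring
        rw [← h, h1]; nlinarith
    have hb : 0 ≤ π 0 * p + π 1 * (1-q) :=
      add_nonneg (mul_nonneg hx0 hp0.le) (mul_nonneg (hnn 1) (by linarith))
    have hS : 0 < γ1 * (π 0 * (1-p) + π 1 * q) + γ2 * (π 0 * p + π 1 * (1-q)) := by
      have := mul_pos hγ1 ha
      have := mul_nonneg hγ2.le hb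
      linarith
    have hfix0 : Φ π 0 = π 0 := by rw [hfix]
    rw [hΦ0, div_eq_iff hS.ne'] at hfix0
    have hfx : A * (π 0) ^ 2 + B * (π 0) + C = 0 := by
      rw [hfform]
      rw [hπ1] at hfix0
      linear_combination hfix0
    have hxeq : π 0 = xs := quad (π 0) hx0 hx1 hfx
    funext j
    fin_cases j
    · exact hxeq
    · show π 1 = 1 - xs
      rw [hπ1, hxeq]
end

section
/- Let 0 < p < 1, 0 < q < 1, let T = [[1−p, p], [q, 1−q]], let γ = (γ¹, γ²) with γ¹, γ² > 0, and let Φ be the single-gene mutation-selection map. For x ∈ [0,1], the probability vector (x, 1−x) satisfies Φ(x, 1−x) = (x, 1−x) if and only if x solves the quadratic equation (p+q−1)·Δγ·x² + [(1−q)·Δγ + γ¹·(p+q)]·x − γ¹·q = 0, where Δγ = γ² − γ¹. -/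
open Matrix

/-- For `x ∈ [0,1]`, the probability vector `(x, 1-x)` is a fixed point of
the single-gene mutation-selection map `Φ` iff `x` solves the quadratic
`(p+q-1)Δγ x² + [(1-q)Δγ + γ¹(p+q)] x - γ¹ q = 0`, where `Δγ = γ² - γ¹`. -/
theorem mutation_selection_single_gene_fixed_point_iff_quadratic
    (p q γ1 γ2 : ℝ) (hp0 : 0 < p) (hp1 : p < 1) (hq0 : 0 < q) (hq1 : q < 1)
    (hγ1 : 0 < γ1) (hγ2 : 0 < γ2)
    (T : Matrix (Fin 2) (Fin 2) ℝ) (hT : T = !![1 - p, p; q, 1 - q])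
    (γ : Fin 2 → ℝ) (hγ : γ = ![γ1, γ2])
    (Φ : (Fin 2 → ℝ) → (Fin 2 → ℝ))
    (hΦ : ∀ ρ j, Φ ρ j = γ j * Matrix.vecMul ρ T j / ∑ k, γ k * Matrix.vecMul ρ T k)
    (Δγ : ℝ) (hΔ : Δγ = γ2 - γ1) :
    ∀ x ∈ Set.Icc (0 : ℝ) 1,
      (Φ ![x, 1 - x] = ![x, 1 - x] ↔
        (p + q - 1) * Δγ * x ^ 2 + ((1 - q) * Δγ + γ1 * (p + q)) * x - γ1 * q = 0) := by
  intro x hx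
  obtain ⟨hx0, hx1⟩ := hx
  subst hT hγ hΔ
  have ha : 0 < x * (1 - p) + (1 - x) * q := by
    have h2 : 0 < min (1 - p) q := lt_min (by linarith) hq0
    nlinarith [mul_nonneg hx0 (sub_nonneg.mpr (min_le_left (1 - p) q)),
      mul_nonneg (sub_nonneg.mpr hx1) (sub_nonneg.mpr (min_le_right (1 - p) q))]
  have hb : 0 < x * p + (1 - x) * (1 - q) := by
    have h2 : 0 < min p (1 - q) := lt_min hp0 (by linarith)
    nlinarith [mul_nonneg hx0 (sub_nonneg.mpr (min_le_left p (1 - q))),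
      mul_nonneg (sub_nonneg.mpr hx1) (sub_nonneg.mpr (min_le_right p (1 - q)))]
  have hD : 0 < γ1 * (x * (1 - p) + (1 - x) * q) + γ2 * (x * p + (1 - x) * (1 - q)) := by
    positivity
  constructor
  · intro h
    have h0 := congrFun h 0
    rw [hΦ] at h0
    simp [Matrix.vecMul, dotProduct, Fin.sum_univ_two] at h0
    field_simp at h0
    nlinarith [h0]
  · intro h
    funext j
    rw [hΦ]
    fin_cases j <;>
      simp [Matrix.vecMul, dotProduct, Fin.sum_univ_two] <;>
      rw [div_eq_iff (by nlinarith)] <;> nlinarith [h]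
end

section
/- Fix ℓ ≥ 1 and, for each l = 1,…,ℓ, mutation rates 0 < p_l < 1, 0 < q_l < 1 with single-gene matrices T_l = [[1−p_l, p_l], [q_l, 1−q_l]], and per-gene fitness coefficients γ_l = (γ_l¹, γ_l²) with γ_l¹, γ_l² > 0. On S = {0,1}^ℓ define T(a,b) = ∏_{l=1}^ℓ T_l(a_l, b_l) and γ(a) = ∏_{l=1}^ℓ (γ_l¹ if a_l = 0, γ_l² if a_l = 1), and let Φ be the mutation-selection map on probability vectors over S. Set Δγ_l = γ_l² − γ_l¹ and x_l = 2γ_l¹q_l / [(1−q_l)·Δγ_l + γ_l¹·(p_l+q_l) + √((γ_l¹p_l + γ_l²q_l)² + 2(γ_l¹p_l − γ_l²q_l)·Δγ_l + (Δγ_l)²)]. Then the product vector ∞π_sel(a) = ∏_{l=1}^ℓ (x_l if a_l = 0, and 1−x_l if a_l = 1) is a probability vector on S and is a fixed point of Φ, i.e. a stationary distribution of the mutation-selection model. -/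
open Matrix

lemma key_coord (p q γ1 γ2 x : ℝ) (hp : 0 < p) (hp1 : p < 1) (hq : 0 < q) (hq1 : q < 1)
    (hγ1 : 0 < γ1) (hγ2 : 0 < γ2)
    (hx : x = 2 * γ1 * q / ((1 - q) * (γ2 - γ1) + γ1 * (p + q) +
      Real.sqrt ((γ1 * p + γ2 * q) ^ 2 + 2 * (γ1 * p - γ2 * q) * (γ2 - γ1) + (γ2 - γ1) ^ 2))) :
    0 < x ∧ x < 1 ∧
      γ1 * ((1 - p) * x + q * (1 - x)) * (1 - x) = γ2 * (p * x + (1 - q) * (1 - x)) * x := by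
  set Δ := γ2 - γ1 with hΔ
  set A := Δ * (1 - p - q) with hA
  set B := -((1 - q) * Δ + γ1 * (p + q)) with hB
  set C := γ1 * q with hC
  set R := (γ1 * p + γ2 * q) ^ 2 + 2 * (γ1 * p - γ2 * q) * Δ + Δ ^ 2 with hR
  have hRpos : 0 < R := by
    have h1 : R = (γ1 * p - γ2 * q + Δ) ^ 2 + 4 * (γ1 * p) * (γ2 * q) := by ring
    nlinarith [sq_nonneg (γ1 * p - γ2 * q + Δ), mul_pos (mul_pos hγ1 hp) (mul_pos hγ2 hq)]
  set s := Real.sqrt R with hs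
  have hs2 : s ^ 2 = R := Real.sq_sqrt hRpos.le
  have hspos : 0 < s := Real.sqrt_pos.mpr hRpos
  have hRB : R = B ^ 2 - 4 * A * C := by rw [hB, hA, hC, hR, hΔ]; ring
  have hCpos : 0 < C := mul_pos hγ1 hq
  have hD : 0 < -B + s := by
    rcases lt_or_ge B 0 with h | h
    · linarith
    · have hΔneg : Δ < 0 := by nlinarith [mul_pos hγ1 (add_pos hp hq)]
      have hpq : p + q < 1 := by nlinarith
      have hAC : A * C < 0 := by
        apply mul_neg_of_neg_of_pos _ hCpos
        exact mul_neg_of_neg_of_pos hΔneg (by linarith)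
      have hsB : B < s := by nlinarith
      linarith
  have hxval : x = 2 * C / (-B + s) := by
    rw [hx]; congr 1; · rw [hC]; ring
    · rw [hB]; ring
  have hxpos : 0 < x := by rw [hxval]; positivity
  have hx1 : x < 1 := by
    rw [hxval, div_lt_one hD]
    rcases le_or_gt (2 * C + B) 0 with h | h
    · linarith
    · have hABC : A + B + C = -(γ2 * p) := by rw [hA, hB, hC, hΔ]; ring
      have : (2 * C + B) ^ 2 < s ^ 2 := by nlinarith [mul_pos hγ2 hp]
      nlinarith
  have hxD : x * (-B + s) = 2 * C := by
    rw [hxval]; field_simp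
  have hquad : A * x ^ 2 + B * x + C = 0 := by
    have hD2 : (-B + s) ^ 2 ≠ 0 := pow_ne_zero _ (ne_of_gt hD)
    have expand : (A * x ^ 2 + B * x + C) * (-B + s) ^ 2
        = A * (x * (-B + s)) ^ 2 + B * (x * (-B + s)) * (-B + s) + C * (-B + s) ^ 2 := by ring
    have h2 : (A * x ^ 2 + B * x + C) * (-B + s) ^ 2 = 0 := by
      rw [expand, hxD]; linear_combination C * hs2 + C * hRB
    exact (mul_eq_zero.mp h2).resolve_right hD2
  refine ⟨hxpos, hx1, ?_⟩
  have heq : γ1 * ((1 - p) * x + q * (1 - x)) * (1 - x) - γ2 * (p * x + (1 - q) * (1 - x)) * x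
      = A * x ^ 2 + B * x + C := by rw [hA, hB, hC, hΔ]; ring
  linarith [heq ▸ hquad]

/-- Under the product (tensor) forms of the transition matrix and the
fitness vector (Assumptions 2.2 and 2.3), the product vector
`∞π_sel(a) = ∏ l, (x_l if a_l = 0, 1 - x_l if a_l = 1)` is a probability vector on
`S = {0,1}^ℓ` and a fixed point (stationary distribution) of the mutation-selection map. -/
theorem mutation_selection_product_stationary
    (ℓ : ℕ) (hℓ : 1 ≤ ℓ) (p q : Fin ℓ → ℝ)
    (hp : ∀ l, 0 < p l ∧ p l < 1) (hq : ∀ l, 0 < q l ∧ q l < 1)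
    (γ1 γ2 : Fin ℓ → ℝ) (hγ1 : ∀ l, 0 < γ1 l) (hγ2 : ∀ l, 0 < γ2 l)
    (Tl : Fin ℓ → Matrix (Fin 2) (Fin 2) ℝ)
    (hTl : ∀ l, Tl l = !![1 - p l, p l; q l, 1 - q l])
    (T : Matrix (Fin ℓ → Fin 2) (Fin ℓ → Fin 2) ℝ)
    (hT : ∀ a b, T a b = ∏ l, Tl l (a l) (b l))
    (γ : (Fin ℓ → Fin 2) → ℝ)
    (hγ : ∀ a, γ a = ∏ l, if a l = 0 then γ1 l else γ2 l)
    (Φ : ((Fin ℓ → Fin 2) → ℝ) → ((Fin ℓ → Fin 2) → ℝ))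
    (hΦ : ∀ ρ j, Φ ρ j = γ j * Matrix.vecMul ρ T j / ∑ k, γ k * Matrix.vecMul ρ T k)
    (Δγ : Fin ℓ → ℝ) (hΔ : ∀ l, Δγ l = γ2 l - γ1 l)
    (x : Fin ℓ → ℝ)
    (hx : ∀ l, x l = 2 * γ1 l * q l / ((1 - q l) * Δγ l + γ1 l * (p l + q l) +
      Real.sqrt ((γ1 l * p l + γ2 l * q l) ^ 2
        + 2 * (γ1 l * p l - γ2 l * q l) * Δγ l + Δγ l ^ 2)))
    (πsel : (Fin ℓ → Fin 2) → ℝ)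
    (hπsel : ∀ a, πsel a = ∏ l, if a l = 0 then x l else 1 - x l) :
    (∀ a, 0 ≤ πsel a) ∧ (∑ a, πsel a = 1) ∧ Φ πsel = πsel := by
  have hkey : ∀ l, 0 < x l ∧ x l < 1 ∧
      γ1 l * ((1 - p l) * x l + q l * (1 - x l)) * (1 - x l)
        = γ2 l * (p l * x l + (1 - q l) * (1 - x l)) * x l := by
    intro l
    exact key_coord (p l) (q l) (γ1 l) (γ2 l) (x l) (hp l).1 (hp l).2 (hq l).1 (hq l).2
      (hγ1 l) (hγ2 l) (by rw [hx l, hΔ l])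
  -- per-coordinate probability vector
  set f : Fin ℓ → Fin 2 → ℝ := fun l j => if j = 0 then x l else 1 - x l with hf
  have hfnn : ∀ l j, 0 ≤ f l j := by
    intro l j
    simp only [hf]
    split
    · exact (hkey l).1.le
    · linarith [(hkey l).2.1]
  have hπf : ∀ a, πsel a = ∏ l, f l (a l) := hπsel
  constructor
  · intro a
    rw [hπf]
    exact Finset.prod_nonneg fun l _ => hfnn l (a l)
  have hfsum : ∀ l, ∑ j : Fin 2, f l j = 1 := by
    intro l; simp [hf, Fin.sum_univ_two]
  constructor
  · have h1 : ∑ a : Fin ℓ → Fin 2, πsel a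
        = ∑ a ∈ Fintype.piFinset (fun _ : Fin ℓ => (Finset.univ : Finset (Fin 2))),
            ∏ l, f l (a l) := by
      rw [Fintype.piFinset_univ]
      exact Finset.sum_congr rfl fun a _ => hπf a
    rw [h1, ← Finset.prod_univ_sum]
    simp [hfsum]
  -- fixed point
  -- weight vectors
  set g : Fin ℓ → Fin 2 → ℝ := fun l j => if j = 0 then γ1 l else γ2 l with hg
  set v : Fin ℓ → Fin 2 → ℝ :=
    fun l j => g l j * (x l * Tl l 0 j + (1 - x l) * Tl l 1 j) with hv
  set c : Fin ℓ → ℝ := fun l => v l 0 + v l 1 with hc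
  have hT00 : ∀ l, Tl l 0 0 = 1 - p l := by intro l; rw [hTl l]; simp
  have hT01 : ∀ l, Tl l 0 1 = p l := by intro l; rw [hTl l]; simp
  have hT10 : ∀ l, Tl l 1 0 = q l := by intro l; rw [hTl l]; simp
  have hT11 : ∀ l, Tl l 1 1 = 1 - q l := by intro l; rw [hTl l]; simp
  have hv0 : ∀ l, v l 0 = γ1 l * ((1 - p l) * x l + q l * (1 - x l)) := by
    intro l; simp only [hv, hg, hT00 l, hT10 l, reduceIte]; ring
  have hv1 : ∀ l, v l 1 = γ2 l * (p l * x l + (1 - q l) * (1 - x l)) := by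
    intro l; simp only [hv, hg, hT01 l, hT11 l]
    rw [if_neg (show (1 : Fin 2) ≠ 0 by decide)]; ring
  have hv0pos : ∀ l, 0 < v l 0 := by
    intro l
    rw [hv0 l]
    have h1 := (hkey l).1; have h2 := (hkey l).2.1; have := (hp l).2
    have : 0 < (1 - p l) * x l + q l * (1 - x l) := by nlinarith [(hq l).1]
    exact mul_pos (hγ1 l) this
  have hv1pos : ∀ l, 0 < v l 1 := by
    intro l
    rw [hv1 l]
    have h1 := (hkey l).1; have h2 := (hkey l).2.1
    have : 0 < p l * x l + (1 - q l) * (1 - x l) := by nlinarith [(hp l).1, (hq l).2]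
    exact mul_pos (hγ2 l) this
  have hcpos : ∀ l, 0 < c l := fun l => add_pos (hv0pos l) (hv1pos l)
  -- fixed-point relation per coordinate: v l j = c l * f l j
  have hbal : ∀ l, v l 0 * (1 - x l) = v l 1 * x l := by
    intro l
    rw [hv0 l, hv1 l]
    linarith [(hkey l).2.2]
  have hvf0 : ∀ l, v l 0 = c l * f l 0 := by
    intro l
    simp only [hc, hf, reduceIte]
    linear_combination hbal l
  have hvf1 : ∀ l, v l 1 = c l * f l 1 := by
    intro l
    simp only [hc, hf]
    rw [if_neg (show (1 : Fin 2) ≠ 0 by decide)]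
    linear_combination -(hbal l)
  have hvf : ∀ l j, v l j = c l * f l j := by
    intro l j
    fin_cases j
    · exact hvf0 l
    · exact hvf1 l
  -- compute vecMul
  have hvec : ∀ b, γ b * Matrix.vecMul πsel T b = ∏ l, v l (b l) := by
    intro b
    have h1 : Matrix.vecMul πsel T b = ∑ a : Fin ℓ → Fin 2, πsel a * T a b := by
      simp [Matrix.vecMul, dotProduct]
    rw [h1, hγ b]
    have h2 : ∀ a : Fin ℓ → Fin 2, πsel a * T a b
        = ∏ l, f l (a l) * Tl l (a l) (b l) := by
      intro a
      rw [hπf a, hT a b, ← Finset.prod_mul_distrib]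
    have h3 : ∑ a : Fin ℓ → Fin 2, πsel a * T a b
        = ∏ l, ∑ j : Fin 2, f l j * Tl l j (b l) := by
      rw [Finset.sum_congr rfl fun a _ => h2 a]
      rw [Finset.prod_univ_sum, Fintype.piFinset_univ]
    rw [h3, ← Finset.prod_mul_distrib]
    refine Finset.prod_congr rfl fun l _ => ?_
    have h4 : ∑ j : Fin 2, f l j * Tl l j (b l)
        = x l * Tl l 0 (b l) + (1 - x l) * Tl l 1 (b l) := by
      simp [hf, Fin.sum_univ_two]
    rw [h4]
  have hden : (∑ k, γ k * Matrix.vecMul πsel T k) = ∏ l, c l := by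
    rw [Finset.sum_congr rfl fun k _ => hvec k]
    have h5 : ∀ l : Fin ℓ, ∑ j : Fin 2, v l j = c l := by
      intro l; rw [Fin.sum_univ_two]
    rw [show (∏ l, c l) = ∏ l, ∑ j : Fin 2, v l j from
      (Finset.prod_congr rfl fun l _ => (h5 l).symm)]
    rw [Finset.prod_univ_sum, Fintype.piFinset_univ]
  have hcprod : 0 < ∏ l, c l := Finset.prod_pos fun l _ => hcpos l
  funext b
  rw [hΦ, hvec b, hden]
  have hnum : ∏ l, v l (b l) = (∏ l, c l) * πsel b := by
    rw [hπf b, ← Finset.prod_mul_distrib]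
    exact Finset.prod_congr rfl fun l _ => hvf l (b l)
  rw [hnum]
  exact mul_div_cancel_left₀ _ (ne_of_gt hcprod)
end

section
/- Fix ℓ ≥ 1 and, for each l = 1,…,ℓ, a 2×2 stochastic matrix T_l with strictly positive entries and fitness coefficients γ_l = (γ_l¹, γ_l²) with γ_l¹, γ_l² > 0. On S = {0,1}^ℓ define T(a,b) = ∏_{l=1}^ℓ T_l(a_l, b_l) and γ(a) = ∏_{l=1}^ℓ (γ_l¹ if a_l = 0, γ_l² if a_l = 1), let Φ be the mutation-selection map on probability vectors over S, and let Φ_l be the single-gene mutation-selection map with matrix T_l and fitness γ_l. Then Φ preserves product distributions and acts coordinatewise on them: if π(a) = ∏_{l=1}^ℓ π_l(a_l) for probability vectors π_l on {0,1}, then Φ(π)(a) = ∏_{l=1}^ℓ Φ_l(π_l)(a_l) for all a ∈ S. Consequently, if the genes are independent under the initial distribution, they remain independent under the mutation-selection dynamics for all times. -/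
open Matrix

/-- Under the product (tensor) forms of the transition matrix and the
fitness vector, the mutation-selection map `Φ` preserves product distributions and acts
coordinatewise: if `π(a) = ∏ l, π_l (a l)` then `Φ(π)(a) = ∏ l, Φ_l(π_l)(a l)`, where
`Φ_l` is the single-gene mutation-selection map for gene `l`. -/
theorem mutation_selection_preserves_product_distributions
    (ℓ : ℕ) (hℓ : 1 ≤ ℓ)
    (Tl : Fin ℓ → Matrix (Fin 2) (Fin 2) ℝ)
    (hTlpos : ∀ l i j, 0 < Tl l i j) (hTlrow : ∀ l i, ∑ j, Tl l i j = 1)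
    (γ1 γ2 : Fin ℓ → ℝ) (hγ1 : ∀ l, 0 < γ1 l) (hγ2 : ∀ l, 0 < γ2 l)
    (γl : Fin ℓ → Fin 2 → ℝ) (hγl : ∀ l, γl l = ![γ1 l, γ2 l])
    (T : Matrix (Fin ℓ → Fin 2) (Fin ℓ → Fin 2) ℝ)
    (hT : ∀ a b, T a b = ∏ l, Tl l (a l) (b l))
    (γ : (Fin ℓ → Fin 2) → ℝ)
    (hγ : ∀ a, γ a = ∏ l, if a l = 0 then γ1 l else γ2 l)
    (Φ : ((Fin ℓ → Fin 2) → ℝ) → ((Fin ℓ → Fin 2) → ℝ))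
    (hΦ : ∀ ρ j, Φ ρ j = γ j * Matrix.vecMul ρ T j / ∑ k, γ k * Matrix.vecMul ρ T k)
    (Φl : Fin ℓ → (Fin 2 → ℝ) → (Fin 2 → ℝ))
    (hΦl : ∀ l ρ j, Φl l ρ j
      = γl l j * Matrix.vecMul ρ (Tl l) j / ∑ k, γl l k * Matrix.vecMul ρ (Tl l) k)
    (πl : Fin ℓ → Fin 2 → ℝ)
    (hπlnn : ∀ l i, 0 ≤ πl l i) (hπlsum : ∀ l, ∑ i, πl l i = 1)
    (π : (Fin ℓ → Fin 2) → ℝ) (hπ : ∀ a, π a = ∏ l, πl l (a l)) :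
    ∀ a, Φ π a = ∏ l, Φl l (πl l) (a l) := by

  -- key Fubini identity
  have key : ∀ g : Fin ℓ → Fin 2 → ℝ,
      ∑ k : Fin ℓ → Fin 2, ∏ l, g l (k l) = ∏ l, ∑ i, g l i := by
    intro g
    rw [Finset.prod_univ_sum, ← Fintype.piFinset_univ]
  have hγl' : ∀ l (j : Fin 2), γl l j = if j = 0 then γ1 l else γ2 l := by
    intro l j; rw [hγl]; fin_cases j <;> simp
  have hγprod : ∀ b, γ b = ∏ l, γl l (b l) := by
    intro b; rw [hγ]; exact Finset.prod_congr rfl fun l _ => (hγl' l (b l)).symm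
  have hvec : ∀ b, Matrix.vecMul π T b = ∏ l, Matrix.vecMul (πl l) (Tl l) (b l) := by
    intro b
    simp only [Matrix.vecMul, dotProduct]
    calc ∑ k : Fin ℓ → Fin 2, π k * T k b
        = ∑ k : Fin ℓ → Fin 2, ∏ l, πl l (k l) * Tl l (k l) (b l) := by
          refine Finset.sum_congr rfl fun k _ => ?_
          rw [hπ, hT, Finset.prod_mul_distrib]
      _ = ∏ l, ∑ i, πl l i * Tl l i (b l) := key (fun l i => πl l i * Tl l i (b l))
  have hnum : ∀ b, γ b * Matrix.vecMul π T b
      = ∏ l, γl l (b l) * Matrix.vecMul (πl l) (Tl l) (b l) := by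
    intro b; rw [hγprod, hvec, Finset.prod_mul_distrib]
  have hden : (∑ k, γ k * Matrix.vecMul π T k)
      = ∏ l, ∑ j, γl l j * Matrix.vecMul (πl l) (Tl l) j := by
    rw [← key fun l j => γl l j * Matrix.vecMul (πl l) (Tl l) j]
    exact Finset.sum_congr rfl fun k _ => hnum k
  have hvecpos : ∀ l j, 0 < Matrix.vecMul (πl l) (Tl l) j := by
    intro l j
    have hex : ∃ i, 0 < πl l i := by
      by_contra h
      push_neg at h
      have hz : ∀ i, πl l i = 0 := fun i => le_antisymm (h i) (hπlnn l i)
      have := hπlsum l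
      simp [hz] at this
    obtain ⟨i0, hi0⟩ := hex
    simp only [Matrix.vecMul, dotProduct]
    exact Finset.sum_pos' (fun i _ => mul_nonneg (hπlnn l i) (hTlpos l i j).le)
      ⟨i0, Finset.mem_univ _, mul_pos hi0 (hTlpos l i0 j)⟩
  have hγlpos : ∀ l (j : Fin 2), 0 < γl l j := by
    intro l j; rw [hγl' l j]; split <;> [exact hγ1 l; exact hγ2 l]
  have hdenl : ∀ l, 0 < ∑ j, γl l j * Matrix.vecMul (πl l) (Tl l) j := by
    intro l
    exact Finset.sum_pos (fun j _ => mul_pos (hγlpos l j) (hvecpos l j)) ⟨0, Finset.mem_univ _⟩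
  intro a
  rw [hΦ, hnum, hden, ← Finset.prod_div_distrib]
  exact Finset.prod_congr rfl fun l _ => (hΦl l (πl l) (a l)).symm
end

section
/- For the single-gene mutation-selection map Φ with mutation matrix T = [[1−p, p], [q, 1−q]] and fitness vector γ = (1, γ²) with γ² > 1, the one-step ℓ¹-Lipschitz condition fails when 1−p−q is close to 1: for every γ² > 1 there exists δ > 0 such that for all p, q with 0 < p, 0 < q and p + q < δ, there exist probability vectors π̆ ≠ π̃ on {0,1} with ‖Φ(π̆) − Φ(π̃)‖₁ > ‖π̆ − π̃‖₁. -/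
open Matrix

/-- The single-gene mutation-selection map with mutation rates `p, q` and fitness
vector `(1, γ2)`. -/
noncomputable def singleGeneMutSel (p q γ2 : ℝ) (π : Fin 2 → ℝ) (j : Fin 2) : ℝ :=
  ![(1 : ℝ), γ2] j * Matrix.vecMul π !![1 - p, p; q, 1 - q] j /
    ∑ k, ![(1 : ℝ), γ2] k * Matrix.vecMul π !![1 - p, p; q, 1 - q] k

set_option maxHeartbeats 1000000 in
/-- For fitness `γ = (1, γ²)` with `γ² > 1`, the one-step ℓ¹-Lipschitz
condition for the single-gene mutation-selection map fails when `1 - p - q` is close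
to `1`: for every `γ² > 1` there is `δ > 0` such that whenever `0 < p`, `0 < q` and
`p + q < δ`, there are probability vectors `π̆ ≠ π̃` on `{0,1}` with
`‖Φ(π̆) - Φ(π̃)‖₁ > ‖π̆ - π̃‖₁`. -/
theorem mutation_selection_lipschitz_fails
    (γ2 : ℝ) (hγ2 : 1 < γ2) :
    ∃ δ > (0 : ℝ), ∀ p q : ℝ, 0 < p → 0 < q → p + q < δ →
      ∃ πb πt : Fin 2 → ℝ,
        (∀ i, 0 ≤ πb i) ∧ (∑ i, πb i = 1) ∧
        (∀ i, 0 ≤ πt i) ∧ (∑ i, πt i = 1) ∧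
        πb ≠ πt ∧
        (∑ j, |singleGeneMutSel p q γ2 πb j - singleGeneMutSel p q γ2 πt j|)
          > ∑ j, |πb j - πt j| := by
  have h0 : (0:ℝ) < γ2 := by linarith
  refine ⟨(γ2-1)/(4*γ2^2), div_pos (by linarith) (by positivity), ?_⟩
  intro p q hp hq hpq
  set δ := (γ2-1)/(4*γ2^2) with hδdef
  have hδpos : 0 < δ := div_pos (by linarith) (by positivity)
  have hδle : δ ≤ 1/4 := by
    rw [hδdef, div_le_iff₀ (by positivity)]; nlinarith
  have hkey : γ2 * (1 - δ) ≥ (1 + (γ2-1)*δ)^2 := by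
    have hδeq : δ * (4*γ2^2) = γ2 - 1 := by rw [hδdef]; exact div_mul_cancel₀ _ (by positivity)
    nlinarith [sq_nonneg (γ2-1), mul_pos h0 h0, sq_nonneg δ, mul_pos hδpos hδpos,
      sq_nonneg ((γ2-1)*δ)]
  clear hδdef
  clear_value δ
  have hq1 : q < 1 := by linarith
  have hp1 : p < 1 := by linarith
  -- the two probability vectors
  refine ⟨![1,0], ![1-q,q], ?_, ?_, ?_, ?_, ?_, ?_⟩
  · intro i; fin_cases i <;> norm_num
  · simp [Fin.sum_univ_two]
  · intro i; fin_cases i <;> simp <;> linarith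
  · simp [Fin.sum_univ_two]
  · intro hcon
    have := congrFun hcon 1
    simp at this
    linarith
  -- the main inequality
  set Sb := (1-p) + γ2 * p with hSbdef
  set a := (1-q)*(1-p)+q*q with hadef
  set b := (1-q)*p + q*(1-q) with hbdef
  set St := a + γ2 * b with hStdef
  clear_value St; clear_value a b Sb
  have hSb : 0 < Sb := by rw [hSbdef]; nlinarith
  have hb0 : 0 < b := by rw [hbdef]; nlinarith
  have ha0 : 0 < a := by rw [hadef]; nlinarith
  have hSt : 0 < St := by rw [hStdef]; nlinarith
  -- key analytic inequality
  have hA : q < (1-p)/Sb - a/St := by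
    rw [div_sub_div _ _ hSb.ne' hSt.ne', lt_div_iff₀ (mul_pos hSb hSt)]
    have hid : (1-p)*St - Sb*a = γ2*q*(1-p-q) := by
      rw [hStdef, hSbdef, hadef, hbdef]; ring
    rw [hid]
    have hSb' : Sb ≤ 1 + (γ2-1)*δ := by rw [hSbdef]; nlinarith
    have hSt' : St ≤ 1 + (γ2-1)*δ := by
      have hab : a + b = 1 := by rw [hadef, hbdef]; ring
      have hble : b ≤ p + q := by rw [hbdef]; nlinarith
      have : b < δ := lt_of_le_of_lt hble hpq
      have := mul_le_mul_of_nonneg_left this.le (by linarith : (0:ℝ) ≤ γ2 - 1)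
      rw [hStdef]; linarith
    have hD : (0:ℝ) < 1 + (γ2-1)*δ := by nlinarith
    have step1 : Sb*St ≤ (1+(γ2-1)*δ)^2 := by nlinarith [mul_le_mul hSb' hSt' hSt.le hD.le]
    have step2 : Sb*St ≤ γ2*(1-δ) := le_trans step1 hkey
    have step3 : γ2*(1-δ) < γ2*(1-p-q) := by nlinarith
    nlinarith [mul_lt_mul_of_pos_left (lt_of_le_of_lt step2 step3) hq]
  have e1 : singleGeneMutSel p q γ2 ![1,0] 0 = (1-p)/Sb := by
    rw [hSbdef]
    simp [singleGeneMutSel, Matrix.vecMul, dotProduct, Fin.sum_univ_two]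
  have e2 : singleGeneMutSel p q γ2 ![1,0] 1 = γ2*p/Sb := by
    rw [hSbdef]
    simp [singleGeneMutSel, Matrix.vecMul, dotProduct, Fin.sum_univ_two]
  have e3 : singleGeneMutSel p q γ2 ![1-q,q] 0 = a/St := by
    rw [hStdef, hadef, hbdef]
    simp [singleGeneMutSel, Matrix.vecMul, dotProduct, Fin.sum_univ_two]
  have e4 : singleGeneMutSel p q γ2 ![1-q,q] 1 = γ2*b/St := by
    rw [hStdef, hadef, hbdef]
    simp [singleGeneMutSel, Matrix.vecMul, dotProduct, Fin.sum_univ_two]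
  have sum1 : (1-p)/Sb + γ2*p/Sb = 1 := by
    field_simp
    linarith
  have sum2 : a/St + γ2*b/St = 1 := by
    field_simp
    linarith
  rw [Fin.sum_univ_two, Fin.sum_univ_two, e1, e2, e3, e4]
  simp only [Matrix.cons_val_zero, Matrix.cons_val_one, Matrix.head_cons]
  have habs1 : |(1-p)/Sb - a/St| = (1-p)/Sb - a/St := abs_of_pos (by linarith)
  have habs2 : |γ2*p/Sb - γ2*b/St| = (1-p)/Sb - a/St := by
    rw [abs_sub_comm]
    rw [abs_of_pos (by linarith)]
    linarith
  rw [habs1, habs2]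
  rw [show (1:ℝ) - (1-q) = q by ring, show (0:ℝ) - q = -q by ring,
    abs_of_pos hq, abs_neg, abs_of_pos hq]
  linarith
end
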